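/- Let u : ℝ³ → ℝ be a smooth harmonic function (Δu = 0). Then the vector field V(x) := 2 (∇u(x) · x) ∇u(x) − |∇u(x)|² x + u(x) ∇u(x) is divergence-free: div V = 0 on ℝ³. -/

import Mathlib

open RealInnerProductSpace

noncomputable def lap (u : EuclideanSpace ℝ (Fin 3) → ℝ) (x : EuclideanSpace ℝ (Fin 3)) : ℝ :=
  ∑ i : Fin 3, fderiv ℝ (fun y => fderiv ℝ u y (EuclideanSpace.single i 1)) x
    (EuclideanSpace.single i 1)

noncomputable def divg (V : EuclideanSpace ℝ (Fin 3) → EuclideanSpace ℝ (Fin 3))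
    (x : EuclideanSpace ℝ (Fin 3)) : ℝ :=
  ∑ i : Fin 3, fderiv ℝ (fun y => V y i) x (EuclideanSpace.single i 1)

theorem stmt2 (u : EuclideanSpace ℝ (Fin 3) → ℝ) (hu : ContDiff ℝ (⊤ : ℕ∞) u)
    (harm : ∀ x, lap u x = 0) :
    ∀ x, divg (fun y =>
      (2 * ⟪gradient u y, y⟫) • gradient u y - ‖gradient u y‖ ^ 2 • y
        + u y • gradient u y) x = 0 := by
  classical
  intro x
  set e : Fin 3 → EuclideanSpace ℝ (Fin 3) := fun i => EuclideanSpace.single i (1 : ℝ) with he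
  set g : Fin 3 → EuclideanSpace ℝ (Fin 3) → ℝ := fun j y => fderiv ℝ u y (e j) with hgdef
  have hud : Differentiable ℝ u := hu.differentiable (by simp)
  have hg : ∀ j, ContDiff ℝ (⊤ : ℕ∞) (g j) := fun j =>
    (hu.fderiv_right (by simp)).clm_apply contDiff_const
  have hgd : ∀ j y, DifferentiableAt ℝ (g j) y := fun j y =>
    (hg j).differentiable (by simp) y
  have h2d : DifferentiableAt ℝ (fderiv ℝ u) x :=
    (hu.fderiv_right (m := (⊤ : ℕ∞)) (by simp)).differentiable (by simp) x
  -- relation of fderiv of g j with second derivative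
  have hrel : ∀ j, fderiv ℝ (g j) x
      = (fderiv ℝ (fderiv ℝ u) x).flip (e j) := by
    intro j
    have := fderiv_clm_apply (c := fderiv ℝ u) (u := fun _ => e j) h2d
      (differentiableAt_const _)
    rw [hgdef]
    simp only [this]
    ext v
    simp
  have hsymm : ∀ i j, fderiv ℝ (g j) x (e i) = fderiv ℝ (g i) x (e j) := by
    intro i j
    rw [hrel j, hrel i]
    simp only [ContinuousLinearMap.flip_apply]
    exact second_derivative_symmetric (fun y => (hud y).hasFDerivAt) h2d.hasFDerivAt _ _
  -- gradient facts
  have hgradinner : ∀ (y v : EuclideanSpace ℝ (Fin 3)), ⟪gradient u y, v⟫ = fderiv ℝ u y v := by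
    intro y v
    rw [gradient]
    exact InnerProductSpace.toDual_symm_apply
  have hcomp : ∀ (y : EuclideanSpace ℝ (Fin 3)) (j : Fin 3), gradient u y j = g j y := by
    intro y j
    have := hgradinner y (e j)
    rwa [he, EuclideanSpace.inner_single_right, RCLike.conj_to_real, one_mul] at this
  have hinner : ∀ y : EuclideanSpace ℝ (Fin 3),
      ⟪gradient u y, y⟫ = ∑ j, g j y * y j := by
    intro y
    rw [PiLp.inner_apply]
    exact Finset.sum_congr rfl fun j _ => by rw [RCLike.inner_apply, conj_trivial, hcomp, mul_comm]
  have hnorm : ∀ y : EuclideanSpace ℝ (Fin 3),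
      ‖gradient u y‖ ^ 2 = ∑ j, g j y * g j y := by
    intro y
    rw [← real_inner_self_eq_norm_sq, PiLp.inner_apply]
    exact Finset.sum_congr rfl fun j _ => by rw [RCLike.inner_apply, conj_trivial, hcomp]
  -- rewrite the component functions
  have hVcomp : ∀ i : Fin 3, (fun y : EuclideanSpace ℝ (Fin 3) =>
      ((2 * ⟪gradient u y, y⟫) • gradient u y - ‖gradient u y‖ ^ 2 • y
        + u y • gradient u y) i)
      = fun y => 2 * (∑ j, g j y * y j) * g i y - (∑ j, g j y * g j y) * y i
          + u y * g i y := by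
    intro i
    funext y
    simp only [PiLp.add_apply, PiLp.sub_apply, PiLp.smul_apply, smul_eq_mul,
      hcomp, hinner, hnorm]
  -- derivative computation
  have hy : ∀ (j : Fin 3) (z : EuclideanSpace ℝ (Fin 3)),
      HasFDerivAt (fun y : EuclideanSpace ℝ (Fin 3) => y j)
        (EuclideanSpace.proj (𝕜 := ℝ) j) z := fun j z =>
    (EuclideanSpace.proj (𝕜 := ℝ) j).hasFDerivAt
  have hgj : ∀ j, HasFDerivAt (g j) (fderiv ℝ (g j) x) x := fun j => (hgd j x).hasFDerivAt
  have huF : HasFDerivAt u (fderiv ℝ u x) x := (hud x).hasFDerivAt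
  have hS : HasFDerivAt (fun y => ∑ j, g j y * y j)
      (∑ j, (g j x • (EuclideanSpace.proj (𝕜 := ℝ) j) + (x j) • fderiv ℝ (g j) x)) x :=
    HasFDerivAt.fun_sum fun j _ => (hgj j).mul (hy j x)
  have hB : HasFDerivAt (fun y => ∑ j, g j y * g j y)
      (∑ j, (g j x • fderiv ℝ (g j) x + g j x • fderiv ℝ (g j) x)) x :=
    HasFDerivAt.fun_sum fun j _ => (hgj j).mul (hgj j)
  have hproj : ∀ j k : Fin 3, (EuclideanSpace.proj (𝕜 := ℝ) j) (e k) = if j = k then 1 else 0 := by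
    intro j k
    rw [he]
    simp [EuclideanSpace.single_apply]
  have hfold : ∀ (y : EuclideanSpace ℝ (Fin 3)) (j : Fin 3), fderiv ℝ u y (e j) = g j y :=
    fun y j => rfl
  have key : ∀ i, fderiv ℝ (fun y => 2 * (∑ j, g j y * y j) * g i y
        - (∑ j, g j y * g j y) * y i + u y * g i y) x (e i)
      = 2 * (∑ j, g j x * x j) * fderiv ℝ (g i) x (e i)
        + g i x * (2 * (g i x + ∑ j, x j * fderiv ℝ (g j) x (e i)))
        - ((∑ j, g j x * g j x) + x i * (∑ j, 2 * (g j x * fderiv ℝ (g j) x (e i))))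
        + (u x * fderiv ℝ (g i) x (e i) + g i x * g i x) := by
    intro i
    have htot := (((hS.const_mul 2).mul (hgj i)).sub (hB.mul (hy i x))).add (huF.mul (hgj i))
    rw [HasFDerivAt.fderiv (f := fun y => 2 * (∑ j, g j y * y j) * g i y
        - (∑ j, g j y * g j y) * y i + u y * g i y) htot]
    simp only [ContinuousLinearMap.add_apply, ContinuousLinearMap.sub_apply,
      ContinuousLinearMap.smul_apply, ContinuousLinearMap.coe_sum', Finset.sum_apply,
      smul_eq_mul, hproj, hfold, mul_ite, mul_one, mul_zero, Finset.sum_add_distrib,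
      Finset.sum_ite_eq', Finset.mem_univ, if_true, eq_self_iff_true]
    simp only [Fin.sum_univ_three]
    ring
  -- assemble
  rw [divg]
  have hL : (∑ i, fderiv ℝ (g i) x (e i)) = 0 := harm x
  calc (∑ i : Fin 3, fderiv ℝ (fun y =>
        ((2 * ⟪gradient u y, y⟫) • gradient u y - ‖gradient u y‖ ^ 2 • y
          + u y • gradient u y) i) x (EuclideanSpace.single i 1))
      = ∑ i : Fin 3,
          (2 * (∑ j, g j x * x j) * fderiv ℝ (g i) x (e i)
          + g i x * (2 * (g i x + ∑ j, x j * fderiv ℝ (g j) x (e i)))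
          - ((∑ j, g j x * g j x) + x i * (∑ j, 2 * (g j x * fderiv ℝ (g j) x (e i))))
          + (u x * fderiv ℝ (g i) x (e i) + g i x * g i x)) := by
        refine Finset.sum_congr rfl fun i _ => ?_
        rw [hVcomp i]
        exact key i
    _ = 0 := by
        simp only [Fin.sum_univ_three] at hL ⊢
        rw [hsymm 0 1, hsymm 0 2, hsymm 1 2]
        linear_combination (2 * (g 0 x * x 0 + g 1 x * x 1 + g 2 x * x 2) + u x) * hL
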